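/- arXiv:0901.3471 — 2 statements merged into one kernel-verified Lean document; each statement's English description precedes it below -/
import Mathlib

section
/- Let h be a continuous function on [a,b] and T(h) its least concave majorant, with left derivative T(h)'. Then the support of the Stieltjes measure dT(h)' (the measure induced by the monotone non-increasing function T(h)') is contained in the closed set {t ∈ [a,b] : T(h)(t) = h(t)}. -/
/-! If `h t < T(h) t`, continuity of `h` and lower semicontinuity of the concave function `T(h)`
on `[a,b]` give an interval `[c,d]`, a neighbourhood of `t` in `[a,b]`, on which `h` stays below
`min (T(h) c) (T(h) d)`. Then `T(h) ⊓ (chord of T(h) over [c,d])` is still a concave majorant of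
`h`, so by minimality `T(h)` is affine on `[c,d]`: its left derivative is constant on `(c,d]` and
`μ (c,d] = 0`. Since `μ` lives on `(a,b]`, `t` has a `μ`-null neighbourhood. -/

open Set MeasureTheory

/-- Least concave majorant of `h` on `[a,b]`. -/
noncomputable def lcm (a b : ℝ) (h : ℝ → ℝ) (t : ℝ) : ℝ :=
  sInf {y : ℝ | ∃ z : ℝ → ℝ, ConcaveOn ℝ (Icc a b) z ∧ (∀ x ∈ Icc a b, h x ≤ z x) ∧ y = z t}

open Filter Topology

noncomputable def chord (f : ℝ → ℝ) (c d x : ℝ) : ℝ := f c + slope f c d * (x - c)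

lemma chord_left (f : ℝ → ℝ) (c d : ℝ) : chord f c d c = f c := by simp [chord]

lemma chord_right {f : ℝ → ℝ} {c d : ℝ} (hcd : c ≠ d) : chord f c d d = f d := by
  rw [chord, slope_def_field, div_mul_cancel₀ _ (sub_ne_zero.2 hcd.symm)]
  ring

lemma concaveOn_chord (f : ℝ → ℝ) (c d : ℝ) {s : Set ℝ} (hs : Convex ℝ s) :
    ConcaveOn ℝ s (chord f c d) :=
  ⟨hs, fun x _ y _ p q _ _ hpq => le_of_eq <| by
    simp only [chord, smul_eq_mul]
    linear_combination (f c - slope f c d * c) * hpq⟩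

lemma hasDerivAt_chord (f : ℝ → ℝ) (c d x : ℝ) : HasDerivAt (chord f c d) (slope f c d) x := by
  unfold chord
  simpa using ((hasDerivAt_id x).sub_const c).const_mul (slope f c d) |>.const_add (f c)

lemma sub_eq_slope_mul (f : ℝ → ℝ) (x y : ℝ) : f y - f x = slope f x y * (y - x) := by
  simpa [mul_comm] using (sub_smul_slope f x y).symm

section Concave

variable {s : Set ℝ} {f : ℝ → ℝ} {c d y : ℝ}

lemma ConcaveOn.chord_le (hf : ConcaveOn ℝ s f) (hc : c ∈ s) (hd : d ∈ s) (hy : y ∈ s)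
    (hyd : y ∈ Icc c d) : chord f c d y ≤ f y := by
  rcases hyd.1.eq_or_lt with rfl | hcy
  · rw [chord_left]
  have hslope : slope f c d ≤ slope f c y :=
    hf.slope_anti hc ⟨hy, hcy.ne'⟩ ⟨hd, (hcy.trans_le hyd.2).ne'⟩ hyd.2
  have := sub_eq_slope_mul f c y
  rw [chord]
  nlinarith

lemma ConcaveOn.le_chord (hf : ConcaveOn ℝ s f) (hc : c ∈ s) (hd : d ∈ s) (hy : y ∈ s)
    (hcd : c < d) (hy_out : y ∉ Ioo c d) : f y ≤ chord f c d y := by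
  have := sub_eq_slope_mul f c y
  rw [chord]
  rcases lt_trichotomy y c with hyc | rfl | hcy
  · have : slope f c y ≥ slope f c d :=
      hf.slope_anti hc ⟨hy, hyc.ne⟩ ⟨hd, hcd.ne'⟩ (hyc.trans hcd).le
    nlinarith
  · simp
  · have hdy : d ≤ y := not_lt.1 fun hyd => hy_out ⟨hcy, hyd⟩
    have : slope f c y ≤ slope f c d := hf.slope_anti hc ⟨hd, hcd.ne'⟩ ⟨hy, hcy.ne'⟩ hdy
    nlinarith

variable {a b t : ℝ}

lemma ConcaveOn.exists_sub_le_mul_abs (hf : ConcaveOn ℝ (Icc a b) f) (ht : t ∈ Icc a b) :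
    ∃ K, ∀ x ∈ Icc a b, f t - f x ≤ K * |x - t| := by
  refine ⟨|slope f t a| + |slope f t b|, fun x hx => ?_⟩
  have hsub := sub_eq_slope_mul f t x
  rcases lt_trichotomy x t with hxt | rfl | htx
  · have : slope f t x ≤ slope f t a := hf.slope_anti ht ⟨⟨le_rfl, hx.1.trans hx.2⟩,
      (hx.1.trans_lt hxt).ne⟩ ⟨hx, hxt.ne⟩ hx.1
    rw [abs_of_neg (sub_neg.2 hxt)]
    nlinarith [le_abs_self (slope f t a), abs_nonneg (slope f t b)]
  · simp
  · have : slope f t b ≤ slope f t x := hf.slope_anti ht ⟨hx, htx.ne'⟩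
      ⟨⟨hx.1.trans hx.2, le_rfl⟩, (htx.trans_le hx.2).ne'⟩ hx.2
    rw [abs_of_pos (sub_pos.2 htx)]
    nlinarith [neg_abs_le (slope f t b), abs_nonneg (slope f t a)]

lemma ConcaveOn.lowerSemicontinuousWithinAt_Icc (hf : ConcaveOn ℝ (Icc a b) f)
    (ht : t ∈ Icc a b) : LowerSemicontinuousWithinAt f (Icc a b) t := by
  obtain ⟨K, hK⟩ := hf.exists_sub_le_mul_abs ht
  intro y hy
  have hlim : Tendsto (fun x => f t - K * |x - t|) (𝓝[Icc a b] t) (𝓝 (f t)) := by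
    have : Continuous fun x => f t - K * |x - t| := by fun_prop
    simpa using (this.tendsto t).mono_left nhdsWithin_le_nhds
  filter_upwards [hlim.eventually_const_lt hy, self_mem_nhdsWithin] with x hx hxab
  linarith [hK x hxab]

end Concave

lemma exists_Icc_subset_of_mem_nhdsWithin_Icc {a b t : ℝ} {S : Set ℝ} (hab : a < b)
    (ht : t ∈ Icc a b) (hS : S ∈ 𝓝[Icc a b] t) :
    ∃ c d, a ≤ c ∧ c < d ∧ d ≤ b ∧ Icc c d ⊆ S ∧ Ioc c d ∈ 𝓝[Ioc a b] t := by
  obtain ⟨ε, hε, hball⟩ := Metric.mem_nhdsWithin_iff.1 hS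
  refine ⟨max a (t - ε / 2), min b (t + ε / 2), le_max_left _ _, ?_, min_le_left _ _, ?_, ?_⟩
  · simp only [max_lt_iff, lt_min_iff]
    refine ⟨⟨hab, ?_⟩, ?_, ?_⟩ <;> linarith [ht.1, ht.2]
  · intro x hx
    simp only [mem_Icc, max_le_iff, le_min_iff] at hx
    refine hball ⟨?_, ⟨hx.1.1, hx.2.1⟩⟩
    rw [Metric.mem_ball, Real.dist_eq, abs_lt]
    constructor <;> linarith
  · refine Metric.mem_nhdsWithin_iff.2 ⟨ε / 2, half_pos hε, fun x ⟨hx, hxab⟩ => ?_⟩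
    rw [Metric.mem_ball, Real.dist_eq, abs_lt] at hx
    simp only [mem_Ioc, max_lt_iff, le_min_iff]
    exact ⟨⟨hxab.1, by linarith⟩, hxab.2, by linarith⟩

lemma HasDerivWithinAt.eq_of_eqOn_Ioc {f φ : ℝ → ℝ} {f' m c s : ℝ}
    (hf : HasDerivWithinAt f f' (Iio s) s) (hφ : HasDerivAt φ m s) (hfφ : EqOn f φ (Ioc c s))
    (hcs : c < s) : f' = m := by
  have hφf : HasDerivWithinAt f m (Iio s) s := by
    refine hφ.hasDerivWithinAt.congr_of_eventuallyEq ?_ (hfφ ⟨hcs, le_rfl⟩)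
    filter_upwards [Ioo_mem_nhdsLT hcs] with x hx using hfφ ⟨hx.1, hx.2.le⟩
  exact (uniqueDiffWithinAt_Iio s).eq_deriv _ hf hφf

lemma measure_Ioc_eq_zero_of_forall {μ : Measure ℝ} {c d : ℝ} (hcd : c < d)
    (hμ : ∀ s ∈ Ioo c d, μ (Ioc s d) = 0) : μ (Ioc c d) = 0 := by
  obtain ⟨u, -, hu, hlim⟩ := exists_seq_strictAnti_tendsto' hcd
  refine measure_mono_null (fun x hx => ?_) (measure_iUnion_null fun n => hμ (u n) (hu n))
  obtain ⟨n, hn⟩ := (hlim.eventually (eventually_lt_nhds hx.1)).exists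
  exact mem_iUnion.2 ⟨n, hn, hx.2⟩

namespace LeastConcaveMajorant

variable {a b t : ℝ} {h : ℝ → ℝ}

lemma exists_concaveOn_majorant (hcont : ContinuousOn h (Icc a b)) :
    ∃ z : ℝ → ℝ, ConcaveOn ℝ (Icc a b) z ∧ ∀ x ∈ Icc a b, h x ≤ z x := by
  obtain ⟨C, hC⟩ := (isCompact_Icc.image_of_continuousOn hcont).bddAbove
  exact ⟨fun _ => C, concaveOn_const C (convex_Icc a b), fun x hx => hC ⟨x, hx, rfl⟩⟩

lemma le_lcm (hcont : ContinuousOn h (Icc a b)) (ht : t ∈ Icc a b) : h t ≤ lcm a b h t := by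
  obtain ⟨z, hz, hzh⟩ := exists_concaveOn_majorant hcont
  exact le_csInf ⟨z t, z, hz, hzh, rfl⟩ fun _ ⟨_, _, hzh, hy⟩ => hy ▸ hzh t ht

lemma lcm_le {z : ℝ → ℝ} (hz : ConcaveOn ℝ (Icc a b) z) (hzh : ∀ x ∈ Icc a b, h x ≤ z x)
    (ht : t ∈ Icc a b) : lcm a b h t ≤ z t :=
  csInf_le ⟨h t, fun _ ⟨_, _, hzh, hy⟩ => hy ▸ hzh t ht⟩ ⟨z, hz, hzh, rfl⟩

lemma concaveOn_lcm (hcont : ContinuousOn h (Icc a b)) : ConcaveOn ℝ (Icc a b) (lcm a b h) := by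
  refine ⟨convex_Icc a b, fun x hx y hy p q hp hq hpq => ?_⟩
  obtain ⟨z₀, hz₀, hz₀h⟩ := exists_concaveOn_majorant hcont
  refine le_csInf ⟨_, z₀, hz₀, hz₀h, rfl⟩ ?_
  rintro w ⟨z, hz, hzh, rfl⟩
  calc p • lcm a b h x + q • lcm a b h y ≤ p • z x + q • z y := by
        gcongr <;> exact lcm_le hz hzh ‹_›
    _ ≤ z (p • x + q • y) := hz.2 hx hy hp hq hpq

lemma eqOn_chord_of_le_min (hcont : ContinuousOn h (Icc a b)) {c d : ℝ} (hac : a ≤ c)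
    (hcd : c < d) (hdb : d ≤ b) (hbelow : ∀ x ∈ Icc c d, h x ≤ min (lcm a b h c) (lcm a b h d)) :
    EqOn (lcm a b h) (chord (lcm a b h) c d) (Icc c d) := by
  set F := lcm a b h
  have hF : ConcaveOn ℝ (Icc a b) F := concaveOn_lcm hcont
  have hc : c ∈ Icc a b := ⟨hac, hcd.le.trans hdb⟩
  have hd : d ∈ Icc a b := ⟨hac.trans hcd.le, hdb⟩
  have hmajorant : ∀ x ∈ Icc a b, h x ≤ (F ⊓ chord F c d) x := by
    intro x hx
    refine le_inf (le_lcm hcont hx) ?_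
    by_cases hxcd : x ∈ Ioo c d
    · have hmin := (concaveOn_chord F c d (convex_Icc c d)).min_le_of_mem_Icc
        (left_mem_Icc.2 hcd.le) (right_mem_Icc.2 hcd.le) (Ioo_subset_Icc_self hxcd)
      rw [chord_left, chord_right hcd.ne] at hmin
      exact (hbelow x (Ioo_subset_Icc_self hxcd)).trans hmin
    · exact (le_lcm hcont hx).trans (hF.le_chord hc hd hx hcd hxcd)
  intro x hx
  have hxab : x ∈ Icc a b := ⟨hac.trans hx.1, hx.2.trans hdb⟩
  have hconc : ConcaveOn ℝ (Icc a b) (F ⊓ chord F c d) :=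
    hF.inf (concaveOn_chord F c d (convex_Icc a b))
  exact ((lcm_le hconc hmajorant hxab).trans inf_le_right).antisymm (hF.chord_le hc hd hxab hx)

lemma exists_eqOn_chord_of_lt (hab : a < b) (hcont : ContinuousOn h (Icc a b))
    (ht : t ∈ Icc a b) (hlt : h t < lcm a b h t) :
    ∃ c d, a ≤ c ∧ c < d ∧ d ≤ b ∧ Ioc c d ∈ 𝓝[Ioc a b] t ∧
      EqOn (lcm a b h) (chord (lcm a b h) c d) (Icc c d) := by
  set F := lcm a b h
  set ε := (F t - h t) / 2 with hε
  have hS : ∀ᶠ x in 𝓝[Icc a b] t, F t - ε < F x ∧ h x < h t + ε :=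
    ((concaveOn_lcm hcont).lowerSemicontinuousWithinAt_Icc ht _ (by linarith)).and
      ((hcont t ht).eventually_lt_const (by linarith))
  obtain ⟨c, d, hac, hcd, hdb, hsub, hnhds⟩ := exists_Icc_subset_of_mem_nhdsWithin_Icc hab ht hS
  refine ⟨c, d, hac, hcd, hdb, hnhds, eqOn_chord_of_le_min hcont hac hcd hdb fun x hx => ?_⟩
  change h x ≤ min (F c) (F d)
  have hx := (hsub hx).2
  have hc := (hsub (left_mem_Icc.2 hcd.le)).1
  have hd := (hsub (right_mem_Icc.2 hcd.le)).1
  exact le_min (by linarith) (by linarith)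

end LeastConcaveMajorant

theorem support_stieltjes_lcm_deriv_subset_contact_general (a b : ℝ) (hab : a < b) (h : ℝ → ℝ)
    (hcont : ContinuousOn h (Icc a b))
    (g : ℝ → ℝ)
    -- `g` is the left derivative of the least concave majorant on `(a,b]`
    (hg : ∀ t ∈ Ioc a b, HasDerivWithinAt (lcm a b h) (g t) (Iio t) t)
    (μ : Measure ℝ)
    -- `μ` is the Stieltjes measure `d(-g)` induced by the monotone non-increasing `g`
    (hμ : ∀ s t : ℝ, s ∈ Ioc a b → t ∈ Ioc a b → s ≤ t →
      μ (Ioc s t) = ENNReal.ofReal (g s - g t))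
    (hμsupp : μ (Ioc a b)ᶜ = 0) :
    ∀ t : ℝ, (∀ U ∈ nhds t, 0 < μ U) → t ∈ Icc a b ∧ lcm a b h t = h t := by
  intro t hsupp
  have ht : t ∈ Icc a b := by
    by_contra ht
    exact (hsupp _ (isClosed_Icc.isOpen_compl.mem_nhds ht)).ne'
      (measure_mono_null (compl_subset_compl.2 Ioc_subset_Icc_self) hμsupp)
  refine ⟨ht, (LeastConcaveMajorant.le_lcm hcont ht).antisymm' (not_lt.1 fun hlt => ?_)⟩
  obtain ⟨c, d, hac, hcd, hdb, hnhds, hchord⟩ :=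
    LeastConcaveMajorant.exists_eqOn_chord_of_lt hab hcont ht hlt
  have hIoc : Ioc c d ⊆ Ioc a b := Ioc_subset_Ioc hac hdb
  have hg_const : ∀ s ∈ Ioc c d, g s = slope (lcm a b h) c d := fun s hs =>
    (hg s (hIoc hs)).eq_of_eqOn_Ioc (hasDerivAt_chord _ c d s)
      (hchord.mono (Ioc_subset_Icc_self.trans (Icc_subset_Icc_right hs.2))) hs.1
  have hd : d ∈ Ioc c d := right_mem_Ioc.2 hcd
  have hμcd : μ (Ioc c d) = 0 := measure_Ioc_eq_zero_of_forall hcd fun s hs => by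
    rw [hμ s d (hIoc (Ioo_subset_Ioc_self hs)) (hIoc hd) hs.2.le,
      hg_const s (Ioo_subset_Ioc_self hs), hg_const d hd, sub_self, ENNReal.ofReal_zero]
  obtain ⟨U, hU, hUsub⟩ := mem_nhdsWithin_iff_exists_mem_nhds_inter.1 hnhds
  refine (hsupp U hU).ne' (measure_mono_null (fun x hx => ?_) (measure_union_null hμcd hμsupp))
  by_cases hx' : x ∈ Ioc a b
  exacts [Or.inl (hUsub ⟨hx, hx'⟩), Or.inr hx']

/-- The support of the Stieltjes measure induced by the (non-increasing) left derivative
of the least concave majorant is contained in the contact set `{T(h) = h}`. -/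
theorem support_stieltjes_lcm_deriv_subset_contact (a b : ℝ) (hab : a < b) (h : ℝ → ℝ)
    (hcont : ContinuousOn h (Icc a b))
    (g : ℝ → ℝ)
    -- `g` is the left derivative of the least concave majorant on `(a,b]`
    (hg : ∀ t ∈ Ioc a b, HasDerivWithinAt (lcm a b h) (g t) (Iio t) t)
    (hmono : AntitoneOn g (Ioc a b))
    (μ : Measure ℝ)
    -- `μ` is the Stieltjes measure `d(-g)` induced by the monotone non-increasing `g`
    (hμ : ∀ s t : ℝ, s ∈ Ioc a b → t ∈ Ioc a b → s ≤ t →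
      μ (Ioc s t) = ENNReal.ofReal (g s - g t))
    (hμsupp : μ (Ioc a b)ᶜ = 0) :
    ∀ t : ℝ, (∀ U ∈ nhds t, 0 < μ U) → t ∈ Icc a b ∧ lcm a b h t = h t :=
  support_stieltjes_lcm_deriv_subset_contact_general a b hab h hcont g hg μ hμ hμsupp
end

section
/- Let h be a continuous function on [a,b] and T(h) its least concave majorant. Then for every t in (a,b), the left derivative of T(h) at t equals min_{u < t} max_{v ≥ t} (h(v) - h(u))/(v - u), where u ranges over [a,t) and v over [t,b]. -/
/-!
The left derivative `d` of the concave majorant `T` at `t` is the largest slope of a line through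
`(t, T t)` lying above `T`. For `u < t`, a line through `(t, T t)` of slope `c < d` lies strictly
above `h` to the left of `t`; if all slopes from `u` into `[t, b]` were at most `c`, it would lie
strictly above `h` on the right as well, so a slightly lowered copy would be a concave majorant
below `T t` at `t`. Conversely, the line of slope `d + ε` through `(t, T t)` cannot majorize `h`,
and a point `u < t` where `h` exceeds it sees all of `[t, b]` with slope at most `d + ε`.
-/

open Set

open Filter Topology

lemma concaveOn_line {s : Set ℝ} (hs : Convex ℝ s) (x₀ y₀ m : ℝ) :
    ConcaveOn ℝ s (fun x => y₀ + m * (x - x₀)) := by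
  refine ⟨hs, fun x _ y _ p q _ _ hpq => le_of_eq ?_⟩
  simp only [smul_eq_mul]
  linear_combination (y₀ - m * x₀) * hpq

lemma HasDerivWithinAt.le_of_eventually_le_add_mul {f : ℝ → ℝ} {d m t : ℝ}
    (hf : HasDerivWithinAt f d (Iio t) t) (hm : ∀ᶠ s in 𝓝[<] t, f s ≤ f t + m * (s - t)) :
    m ≤ d := by
  refine ge_of_tendsto ((hasDerivWithinAt_iff_tendsto_slope' self_notMem_Iio).1 hf) ?_
  filter_upwards [hm, self_mem_nhdsWithin] with s hs (hst : s < t)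
  rw [slope_def_field, le_div_iff_of_neg (sub_neg.2 hst)]
  linarith

namespace ConcaveOn

variable {S : Set ℝ} {f : ℝ → ℝ} {t x : ℝ}

lemma differentiableWithinAt_Iio_of_mem_interior (hf : ConcaveOn ℝ S f) (ht : t ∈ interior S) :
    DifferentiableWithinAt ℝ f (Iio t) t := by
  simpa using (hf.neg.differentiableWithinAt_Iio_of_mem_interior ht).neg

lemma le_add_leftDeriv_mul (hf : ConcaveOn ℝ S f) (ht : t ∈ interior S) (hx : x ∈ S) :
    f x ≤ f t + derivWithin f (Iio t) t * (x - t) := by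
  have hsub : f x - f t = (x - t) * slope f t x := by
    simpa [smul_eq_mul] using (sub_smul_slope f t x).symm
  rcases lt_trichotomy x t with hxt | rfl | htx
  · have hd := hf.leftDeriv_le_slope hx (interior_subset ht) hxt
      (hf.differentiableWithinAt_Iio_of_mem_interior ht)
    rw [slope_comm] at hd
    nlinarith
  · simp
  · have hd : slope f t x ≤ derivWithin f (Iio t) t := by
      simpa [derivWithin.neg, slope_neg_fun] using
        (hf.neg.leftDeriv_le_rightDeriv_of_mem_interior ht).trans
          (hf.neg.rightDeriv_le_slope_of_mem_interior ht hx htx)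
    nlinarith

end ConcaveOn

section LeastConcaveMajorant

variable {a b t u x : ℝ} {h z : ℝ → ℝ}

lemma lcm_le (hz : ConcaveOn ℝ (Icc a b) z) (hhz : ∀ y ∈ Icc a b, h y ≤ z y)
    (hx : x ∈ Icc a b) : lcm a b h x ≤ z x :=
  csInf_le ⟨h x, by rintro _ ⟨w, -, hhw, rfl⟩; exact hhw x hx⟩ ⟨z, hz, hhz, rfl⟩

lemma le_lcm_of_forall_le (hh : BddAbove (h '' Icc a b)) {c : ℝ}
    (hc : ∀ w : ℝ → ℝ, ConcaveOn ℝ (Icc a b) w → (∀ y ∈ Icc a b, h y ≤ w y) → c ≤ w x) :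
    c ≤ lcm a b h x := by
  obtain ⟨C, hC⟩ := hh
  refine le_csInf ⟨C, fun _ => C, concaveOn_const C (convex_Icc a b),
    fun y hy => hC (mem_image_of_mem h hy), rfl⟩ ?_
  rintro _ ⟨w, hw, hhw, rfl⟩
  exact hc w hw hhw

lemma le_lcm (hh : BddAbove (h '' Icc a b)) (hx : x ∈ Icc a b) : h x ≤ lcm a b h x :=
  le_lcm_of_forall_le hh fun _ _ hhw => hhw x hx

lemma concaveOn_lcm (hh : BddAbove (h '' Icc a b)) : ConcaveOn ℝ (Icc a b) (lcm a b h) := by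
  refine ⟨convex_Icc a b, fun x hx y hy p q hp hq hpq => le_lcm_of_forall_le hh fun w hw hhw => ?_⟩
  calc p • lcm a b h x + q • lcm a b h y ≤ p • w x + q • w y := by
        gcongr
        · exact lcm_le hw hhw hx
        · exact lcm_le hw hhw hy
    _ ≤ w (p • x + q • y) := hw.2 hx hy hp hq hpq

/-- By compactness, `z` can be lowered by a positive constant and remain a majorant. -/
lemma lcm_lt_of_forall_lt (hh : ContinuousOn h (Icc a b)) (hz : ConcaveOn ℝ (Icc a b) z)
    (hzc : ContinuousOn z (Icc a b)) (hlt : ∀ y ∈ Icc a b, h y < z y) (hx : x ∈ Icc a b) :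
    lcm a b h x < z x := by
  obtain ⟨y₀, hy₀, hmin⟩ := isCompact_Icc.exists_isMinOn ⟨x, hx⟩ (hzc.sub hh)
  have hpos : 0 < z y₀ - h y₀ := sub_pos.2 (hlt y₀ hy₀)
  have hmaj : ∀ y ∈ Icc a b, h y ≤ z y + -(z y₀ - h y₀) := fun y hy => by
    have := hmin hy
    simp only [mem_ofPred_eq, Pi.sub_apply] at this
    linarith
  have : lcm a b h x ≤ z x + -(z y₀ - h y₀) := lcm_le (hz.add_const _) hmaj hx
  linarith

lemma leftDeriv_lcm_le_sSup_slope (hh : ContinuousOn h (Icc a b)) (ht : t ∈ Ioo a b)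
    (hu : u ∈ Ico a t) : derivWithin (lcm a b h) (Iio t) t ≤ sSup (slope h u '' Icc t b) := by
  set T := lcm a b h
  set d := derivWithin T (Iio t) t
  have hint : t ∈ interior (Icc a b) := by rwa [interior_Icc]
  have hTc := concaveOn_lcm (isCompact_Icc.bddAbove_image hh)
  by_contra! hlt
  set c := sSup (slope h u '' Icc t b)
  have hbdd : BddAbove (slope h u '' Icc t b) := by
    refine isCompact_Icc.bddAbove_image
      (show ContinuousOn (fun v => (v - u)⁻¹ * (h v - h u)) _ from .mul ?_ ?_)
    · exact (continuousOn_id.sub continuousOn_const).inv₀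
        fun v hv => (sub_pos.2 (hu.2.trans_le hv.1)).ne'
    · exact (hh.mono (Icc_subset_Icc ht.1.le le_rfl)).sub continuousOn_const
  have hright : ∀ v ∈ Icc t b, h v ≤ h u + c * (v - u) := fun v hv => by
    have := le_csSup hbdd (mem_image_of_mem _ hv)
    rw [slope_def_field, div_le_iff₀ (sub_pos.2 (hu.2.trans_le hv.1))] at this
    linarith
  have hleft : ∀ x ∈ Ico a t, h x < T t + c * (x - t) := fun x hx =>
    calc h x ≤ T x := le_lcm (isCompact_Icc.bddAbove_image hh) ⟨hx.1, hx.2.le.trans ht.2.le⟩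
      _ ≤ T t + d * (x - t) := hTc.le_add_leftDeriv_mul hint ⟨hx.1, hx.2.le.trans ht.2.le⟩
      _ < T t + c * (x - t) := add_lt_add_right (mul_lt_mul_of_neg_right hlt (sub_neg.2 hx.2)) _
  have hmaj : ∀ x ∈ Icc a b, h x < T t + c * (x - t) := by
    intro x hx
    rcases lt_or_ge x t with hxt | htx
    · exact hleft x ⟨hx.1, hxt⟩
    · linarith [hright x ⟨htx, hx.2⟩, hleft u hu]
  have := lcm_lt_of_forall_lt hh (concaveOn_line (convex_Icc a b) t (T t) c) (by fun_prop) hmaj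
    (Ioo_subset_Icc_self ht)
  simp only [sub_self, mul_zero, add_zero] at this
  exact lt_irrefl _ this

lemma exists_sSup_slope_le_leftDeriv_lcm_add (hh : BddAbove (h '' Icc a b)) (ht : t ∈ Ioo a b)
    {ε : ℝ} (hε : 0 < ε) :
    ∃ u ∈ Ico a t, sSup (slope h u '' Icc t b) ≤ derivWithin (lcm a b h) (Iio t) t + ε := by
  set T := lcm a b h
  set d := derivWithin T (Iio t) t
  have hint : t ∈ interior (Icc a b) := by rwa [interior_Icc]
  have hTc := concaveOn_lcm hh
  have hsupp : ∀ x ∈ Icc a b, h x ≤ T t + d * (x - t) := fun x hx =>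
    (le_lcm hh hx).trans (hTc.le_add_leftDeriv_mul hint hx)
  by_contra! hgt
  have hmaj : ∀ x ∈ Icc a b, h x ≤ T t + (d + ε) * (x - t) := by
    intro x hx
    rcases lt_or_ge x t with hxt | htx
    · by_contra! hx_above
      refine (hgt x ⟨hx.1, hxt⟩).not_ge (csSup_le (image_nonempty.2 ⟨t, le_rfl, ht.2.le⟩) ?_)
      rintro _ ⟨v, hv, rfl⟩
      rw [slope_def_field, div_le_iff₀ (sub_pos.2 (hxt.trans_le hv.1))]
      nlinarith [hsupp v ⟨ht.1.le.trans hv.1, hv.2⟩, hv.1]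
    · nlinarith [hsupp x hx]
  have hdiff := (hTc.differentiableWithinAt_Iio_of_mem_interior hint).hasDerivWithinAt
  have : d + ε ≤ d := hdiff.le_of_eventually_le_add_mul <| by
    filter_upwards [Ioo_mem_nhdsLT ht.1] with s hs
    exact lcm_le (concaveOn_line (convex_Icc a b) t (T t) (d + ε)) hmaj
      ⟨hs.1.le, hs.2.le.trans ht.2.le⟩
  linarith

end LeastConcaveMajorant

theorem lcm_leftDeriv_minmax_general (a b : ℝ) (h : ℝ → ℝ)
    (hcont : ContinuousOn h (Icc a b)) :
    ∀ t ∈ Ioo a b,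
      DifferentiableWithinAt ℝ (lcm a b h) (Iio t) t ∧
      derivWithin (lcm a b h) (Iio t) t =
        sInf {x : ℝ | ∃ u ∈ Ico a t,
          x = sSup {y : ℝ | ∃ v ∈ Icc t b, y = (h v - h u) / (v - u)}} := by
  intro t ht
  have hbdd := isCompact_Icc.bddAbove_image hcont
  have hint : t ∈ interior (Icc a b) := by rwa [interior_Icc]
  refine ⟨(concaveOn_lcm hbdd).differentiableWithinAt_Iio_of_mem_interior hint, ?_⟩
  have hset : ∀ (s : Set ℝ) (f : ℝ → ℝ), {y | ∃ v ∈ s, y = f v} = f '' s := by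
    intro s f
    ext
    simp [eq_comm]
  simp only [hset, ← slope_def_field]
  have hlower := fun u (hu : u ∈ Ico a t) => leftDeriv_lcm_le_sSup_slope hcont ht hu
  refine le_antisymm (le_csInf (image_nonempty.2 ⟨a, le_rfl, ht.1⟩) (forall_mem_image.2 hlower))
    (le_of_forall_pos_le_add fun ε hε => ?_)
  obtain ⟨u, hu, hle⟩ := exists_sSup_slope_le_leftDeriv_lcm_add hbdd ht hε
  exact (csInf_le ⟨_, forall_mem_image.2 hlower⟩ (mem_image_of_mem _ hu)).trans hle

/-- Min-max formula for the left derivative of the least concave majorant. -/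
theorem lcm_leftDeriv_minmax (a b : ℝ) (hab : a < b) (h : ℝ → ℝ)
    (hcont : ContinuousOn h (Icc a b)) :
    ∀ t ∈ Ioo a b,
      DifferentiableWithinAt ℝ (lcm a b h) (Iio t) t ∧
      derivWithin (lcm a b h) (Iio t) t =
        sInf {x : ℝ | ∃ u ∈ Ico a t,
          x = sSup {y : ℝ | ∃ v ∈ Icc t b, y = (h v - h u) / (v - u)}} :=
  lcm_leftDeriv_minmax_general a b h hcont
end
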